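/- arXiv:2312.04481 — 4 statements merged into one kernel-verified Lean document; each statement's English description precedes it below -/
import Mathlib

section
/- Let Θ = (θ₋, θ₊) and Φ = (φ₋, φ₊) be open intervals, let W : Θ → ℝ be differentiable, and let g : Θ → Φ be an invertible differentiable function with nonvanishing derivative whose inverse g⁻¹ is differentiable. Let η > 0 and c > 0, define Ŵ = W ∘ g⁻¹ on Φ, and define the densities π(θ) = η exp(−η W(θ)) |W'(θ)| / (1 − exp(−η c)) on Θ and π̂(φ) = η exp(−η Ŵ(φ)) |Ŵ'(φ)| / (1 − exp(−η c)) on Φ. Then for every θ ∈ Θ, π(θ) = π̂(g(θ)) · |g'(θ)|; that is, the WCP prior is invariant under reparameterization: the prior for φ = g(θ) is obtained from the prior for θ by the change-of-variables formula. -/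
/-!
Since `g⁻¹ ∘ g = id` near `θ`, the chain rule gives `(W ∘ g⁻¹)'(g θ) · g'(θ) = W'(θ)` and
`(W ∘ g⁻¹)(g θ) = W(θ)`; so the exponential factors of the two densities agree and taking
absolute values of the derivatives produces exactly the Jacobian factor `|g'(θ)|`.
-/

open Set Filter Topology

section LeftInverse

variable {𝕜 : Type*} [NontriviallyNormedField 𝕜] {W g ginv : 𝕜 → 𝕜} {x : 𝕜}

theorem deriv_mul_deriv_eq_one_of_leftInverse (hginv : DifferentiableAt 𝕜 ginv (g x))
    (hg : DifferentiableAt 𝕜 g x) (hleft : ginv ∘ g =ᶠ[𝓝 x] id) :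
    deriv ginv (g x) * deriv g x = 1 := by
  rw [← deriv_comp x hginv hg, hleft.deriv_eq, deriv_id]

theorem deriv_comp_leftInverse_mul_deriv (hW : DifferentiableAt 𝕜 W x)
    (hginv : DifferentiableAt 𝕜 ginv (g x)) (hg : DifferentiableAt 𝕜 g x)
    (hleft : ginv ∘ g =ᶠ[𝓝 x] id) :
    deriv (W ∘ ginv) (g x) * deriv g x = deriv W x := by
  have hx : ginv (g x) = x := hleft.self_of_nhds
  rw [deriv_comp (g x) (hx.symm ▸ hW) hginv, mul_assoc,
    deriv_mul_deriv_eq_one_of_leftInverse hginv hg hleft, mul_one, hx]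

end LeftInverse

noncomputable def wcpDensity (η c : ℝ) (W : ℝ → ℝ) (θ : ℝ) : ℝ :=
  η * Real.exp (-η * W θ) * |deriv W θ| / (1 - Real.exp (-η * c))

theorem wcpDensity_eq_comp_leftInverse_mul_abs_deriv {η c : ℝ} {W g ginv : ℝ → ℝ} {θ : ℝ}
    (hW : DifferentiableAt ℝ W θ) (hginv : DifferentiableAt ℝ ginv (g θ))
    (hg : DifferentiableAt ℝ g θ) (hleft : ginv ∘ g =ᶠ[𝓝 θ] id) :
    wcpDensity η c W θ = wcpDensity η c (W ∘ ginv) (g θ) * |deriv g θ| := by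
  have hval : (W ∘ ginv) (g θ) = W θ := congrArg W (hleft.self_of_nhds : ginv (g θ) = θ)
  rw [wcpDensity, wcpDensity, hval,
    ← deriv_comp_leftInverse_mul_deriv hW hginv hg hleft, abs_mul]
  ring

theorem stmt_6_general (θm θp φm φp : ℝ) (W g ginv : ℝ → ℝ) (η c : ℝ)
    (hW : ∀ θ ∈ Ioo θm θp, DifferentiableAt ℝ W θ)
    (hgmap : MapsTo g (Ioo θm θp) (Ioo φm φp))
    (hgdiff : ∀ θ ∈ Ioo θm θp, DifferentiableAt ℝ g θ)
    (hleft : ∀ θ ∈ Ioo θm θp, ginv (g θ) = θ)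
    (hginvdiff : ∀ φ ∈ Ioo φm φp, DifferentiableAt ℝ ginv φ) :
    ∀ θ ∈ Ioo θm θp,
      η * Real.exp (-η * W θ) * |deriv W θ| / (1 - Real.exp (-η * c)) =
      (η * Real.exp (-η * (W ∘ ginv) (g θ)) * |deriv (W ∘ ginv) (g θ)| /
        (1 - Real.exp (-η * c))) * |deriv g θ| := by
  intro θ hθ
  have hleftθ : ginv ∘ g =ᶠ[𝓝 θ] id := eventually_of_mem (isOpen_Ioo.mem_nhds hθ) hleft
  exact wcpDensity_eq_comp_leftInverse_mul_abs_deriv (hW θ hθ) (hginvdiff _ (hgmap hθ))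
    (hgdiff θ hθ) hleftθ

/-- Invariance of the univariate WCP prior under reparameterization: for a differentiable
distance function `W` on `Θ = (θm, θp)` and an invertible differentiable reparameterization
`g : Θ → Φ = (φm, φp)` with nonvanishing derivative and differentiable inverse `ginv`,
setting `Ŵ = W ∘ ginv`, the densities
`π(θ) = η exp(−η W(θ)) |W'(θ)| / (1 − exp(−η c))` and
`π̂(φ) = η exp(−η Ŵ(φ)) |Ŵ'(φ)| / (1 − exp(−η c))` satisfy
`π(θ) = π̂(g(θ)) ⬝ |g'(θ)|` for every `θ ∈ Θ`. -/
theorem stmt_6 (θm θp φm φp : ℝ) (W g ginv : ℝ → ℝ) (η c : ℝ)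
    (hη : 0 < η) (hc : 0 < c)
    (hW : ∀ θ ∈ Ioo θm θp, DifferentiableAt ℝ W θ)
    (hgmap : MapsTo g (Ioo θm θp) (Ioo φm φp))
    (hgdiff : ∀ θ ∈ Ioo θm θp, DifferentiableAt ℝ g θ)
    (hg' : ∀ θ ∈ Ioo θm θp, deriv g θ ≠ 0)
    (hginvmap : MapsTo ginv (Ioo φm φp) (Ioo θm θp))
    (hleft : ∀ θ ∈ Ioo θm θp, ginv (g θ) = θ)
    (hright : ∀ φ ∈ Ioo φm φp, g (ginv φ) = φ)
    (hginvdiff : ∀ φ ∈ Ioo φm φp, DifferentiableAt ℝ ginv φ) :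
    ∀ θ ∈ Ioo θm θp,
      η * Real.exp (-η * W θ) * |deriv W θ| / (1 - Real.exp (-η * c)) =
      (η * Real.exp (-η * (W ∘ ginv) (g θ)) * |deriv (W ∘ ginv) (g θ)| /
        (1 - Real.exp (-η * c))) * |deriv g θ| :=
  stmt_6_general θm θp φm φp W g ginv η c hW hgmap hgdiff hleft hginvdiff
end

section
/- Let Θ, Φ ⊆ ℝ^d be open sets, let F : Θ → ℝ^d be differentiable, let h : ℝ^d → ℝ be any function, and let g : Θ → Φ be a bijective differentiable map whose inverse g⁻¹ : Φ → Θ is differentiable. Define F̂ = F ∘ g⁻¹ on Φ, and define π(θ) = |det DF(θ)| · h(F(θ)) on Θ and π̂(φ) = |det DF̂(φ)| · h(F̂(φ)) on Φ, where DF denotes the (Fréchet) derivative. Then for every θ ∈ Θ, π(θ) = π̂(g(θ)) · |det Dg(θ)|. (This is the invariance of the multivariate WCP prior under reparameterization: the prior density for φ = g(θ) is obtained from the prior density for θ by the multivariate change-of-variables formula.) -/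
open Set Filter Topology

/-!
Writing `ψ` for the inverse of `g`, the chain rule applied to `ψ ∘ g = id` near `θ` gives
`det Dψ(g θ) · det Dg(θ) = 1`, and applied to `F ∘ ψ` it gives
`det D(F ∘ ψ)(g θ) = det DF(θ) · det Dψ(g θ)`. Multiplying the second identity by `|det Dg(θ)|`
cancels the factor coming from `ψ`, while `h` is evaluated at the same point `F θ` on both sides.
-/

theorem ContinuousLinearMap.det_comp {R M : Type*} [CommRing R] [TopologicalSpace M]
    [AddCommGroup M] [Module R M] (A B : M →L[R] M) : (A.comp B).det = A.det * B.det :=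
  LinearMap.det_comp (A : M →ₗ[R] M) B

theorem ContinuousLinearMap.det_id {R M : Type*} [CommRing R] [TopologicalSpace M]
    [AddCommGroup M] [Module R M] : (ContinuousLinearMap.id R M).det = 1 :=
  LinearMap.det_id

section LeftInverse

variable {𝕜 E : Type*} [NontriviallyNormedField 𝕜] [NormedAddCommGroup E] [NormedSpace 𝕜 E]
  {g ginv : E → E} {x : E}

theorem fderiv_comp_fderiv_of_eventually_leftInverse (hinv : ginv ∘ g =ᶠ[𝓝 x] id)
    (hg : DifferentiableAt 𝕜 g x) (hginv : DifferentiableAt 𝕜 ginv (g x)) :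
    (fderiv 𝕜 ginv (g x)).comp (fderiv 𝕜 g x) = ContinuousLinearMap.id 𝕜 E := by
  rw [← fderiv_comp x hginv hg, hinv.fderiv_eq, fderiv_id]

theorem det_fderiv_mul_det_fderiv_of_eventually_leftInverse
    (hinv : ginv ∘ g =ᶠ[𝓝 x] id)
    (hg : DifferentiableAt 𝕜 g x) (hginv : DifferentiableAt 𝕜 ginv (g x)) :
    (fderiv 𝕜 ginv (g x)).det * (fderiv 𝕜 g x).det = 1 := by
  rw [← ContinuousLinearMap.det_comp,
    fderiv_comp_fderiv_of_eventually_leftInverse hinv hg hginv, ContinuousLinearMap.det_id]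

end LeftInverse

section JacobianDensity

variable {E : Type*} [NormedAddCommGroup E] [NormedSpace ℝ E]

noncomputable def jacobianDensity (F : E → E) (h : E → ℝ) (x : E) : ℝ :=
  |(fderiv ℝ F x).det| * h (F x)

theorem jacobianDensity_comp_leftInverse_mul {F g ginv : E → E} (h : E → ℝ) {x : E}
    (hinv : ginv ∘ g =ᶠ[𝓝 x] id) (hF : DifferentiableAt ℝ F x)
    (hg : DifferentiableAt ℝ g x) (hginv : DifferentiableAt ℝ ginv (g x)) :
    jacobianDensity (F ∘ ginv) h (g x) * |(fderiv ℝ g x).det| = jacobianDensity F h x := by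
  have hx : ginv (g x) = x := hinv.eq_of_nhds
  have hdet := det_fderiv_mul_det_fderiv_of_eventually_leftInverse hinv hg hginv
  have hchain : fderiv ℝ (F ∘ ginv) (g x) = (fderiv ℝ F x).comp (fderiv ℝ ginv (g x)) := by
    rw [fderiv_comp (g x) (by rwa [hx]) hginv, hx]
  calc jacobianDensity (F ∘ ginv) h (g x) * |(fderiv ℝ g x).det|
      = |(fderiv ℝ F x).det| * h (F x) * |(fderiv ℝ ginv (g x)).det * (fderiv ℝ g x).det| := by
        rw [jacobianDensity, hchain, ContinuousLinearMap.det_comp, Function.comp_apply, hx,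
          abs_mul, abs_mul]
        ring
    _ = jacobianDensity F h x := by rw [hdet, abs_one, mul_one, jacobianDensity]

end JacobianDensity

theorem stmt_7_general {d : ℕ} (Θ Φ : Set (EuclideanSpace ℝ (Fin d)))
    (hΘ : IsOpen Θ)
    (F : EuclideanSpace ℝ (Fin d) → EuclideanSpace ℝ (Fin d))
    (h : EuclideanSpace ℝ (Fin d) → ℝ)
    (g ginv : EuclideanSpace ℝ (Fin d) → EuclideanSpace ℝ (Fin d))
    (hF : ∀ x ∈ Θ, DifferentiableAt ℝ F x)
    (hgmap : MapsTo g Θ Φ)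
    (hleft : ∀ x ∈ Θ, ginv (g x) = x)
    (hgdiff : ∀ x ∈ Θ, DifferentiableAt ℝ g x)
    (hginvdiff : ∀ y ∈ Φ, DifferentiableAt ℝ ginv y) :
    ∀ θ ∈ Θ,
      |(fderiv ℝ F θ).det| * h (F θ) =
      (|(fderiv ℝ (F ∘ ginv) (g θ)).det| * h ((F ∘ ginv) (g θ))) *
        |(fderiv ℝ g θ).det| := by
  intro θ hθ
  have hinv : ginv ∘ g =ᶠ[𝓝 θ] id := eventually_of_mem (hΘ.mem_nhds hθ) hleft
  exact (jacobianDensity_comp_leftInverse_mul h hinv (hF θ hθ) (hgdiff θ hθ)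
    (hginvdiff _ (hgmap hθ))).symm

/-- Invariance of the multivariate WCP prior under reparameterization: for open sets
`Θ, Φ ⊆ ℝ^d`, a differentiable `F : Θ → ℝ^d`, an arbitrary `h : ℝ^d → ℝ`, and a bijective
differentiable map `g : Θ → Φ` with differentiable inverse `ginv`, setting `F̂ = F ∘ ginv`,
the densities `π(θ) = |det DF(θ)| ⬝ h(F(θ))` and `π̂(φ) = |det DF̂(φ)| ⬝ h(F̂(φ))` satisfy
`π(θ) = π̂(g(θ)) ⬝ |det Dg(θ)|` for every `θ ∈ Θ`. -/
theorem stmt_7 {d : ℕ} (Θ Φ : Set (EuclideanSpace ℝ (Fin d)))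
    (hΘ : IsOpen Θ) (hΦ : IsOpen Φ)
    (F : EuclideanSpace ℝ (Fin d) → EuclideanSpace ℝ (Fin d))
    (h : EuclideanSpace ℝ (Fin d) → ℝ)
    (g ginv : EuclideanSpace ℝ (Fin d) → EuclideanSpace ℝ (Fin d))
    (hF : ∀ x ∈ Θ, DifferentiableAt ℝ F x)
    (hgmap : MapsTo g Θ Φ) (hginvmap : MapsTo ginv Φ Θ)
    (hleft : ∀ x ∈ Θ, ginv (g x) = x) (hright : ∀ y ∈ Φ, g (ginv y) = y)
    (hgdiff : ∀ x ∈ Θ, DifferentiableAt ℝ g x)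
    (hginvdiff : ∀ y ∈ Φ, DifferentiableAt ℝ ginv y) :
    ∀ θ ∈ Θ,
      |(fderiv ℝ F θ).det| * h (F θ) =
      (|(fderiv ℝ (F ∘ ginv) (g θ)).det| * h ((F ∘ ginv) (g θ))) *
        |(fderiv ℝ g θ).det| :=
  stmt_7_general Θ Φ hΘ F h g ginv hF hgmap hleft hgdiff hginvdiff
end

section
/- Let n ≥ 1, let σ > 0 and let φ ∈ (−1, 1). Let Σ₀ be the n × n real matrix all of whose entries equal σ², and let Σ be the n × n matrix with entries Σ[i,j] = σ² φ^{|i−j|}. Assume Σ is positive semidefinite (Σ₀ is automatically positive semidefinite). Let Σ₀^{1/2} denote the positive semidefinite square root of Σ₀, and note that Σ₀^{1/2} Σ Σ₀^{1/2} is positive semidefinite. Then the trace of the positive semidefinite square root of Σ₀^{1/2} Σ Σ₀^{1/2} equals σ² · √(n(1 − φ²) − 2φ(1 − φⁿ)) / (1 − φ). -/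
/-! With `J` the all-ones matrix, `Σ₀ = σ² J` and `J² = n J`, so every matrix in the formula is a
multiple of `J`: `Σ₀^{1/2} = √(σ² / n) J`, then `Σ₀^{1/2} Σ Σ₀^{1/2} = (σ² / n) s J` where `s` is
the sum of the entries of `Σ`, and its square root `(√(σ² s) / n) J` has trace `√(σ² s)`.
Finally `s (1 - φ)² = σ² (n (1 - φ²) - 2 φ (1 - φⁿ))`, by induction on `n`. -/

/-- The positive semidefinite square root of a positive semidefinite matrix, as defined in
the older Mathlib (removed since). -/
noncomputable def Matrix.PosSemidef.sqrt {𝕜 : Type*} [RCLike 𝕜] [PartialOrder 𝕜] [StarOrderedRing 𝕜] {n : Type*} [Fintype n]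
    [DecidableEq n] {A : Matrix n n 𝕜} (hA : A.PosSemidef) : Matrix n n 𝕜 :=
  hA.1.eigenvectorUnitary.1 * Matrix.diagonal ((↑) ∘ (√·) ∘ hA.1.eigenvalues) *
  (star hA.1.eigenvectorUnitary : Matrix n n 𝕜)

open Finset Matrix

lemma sum_range_pow_natAbs_sub_mul (φ : ℝ) (m : ℕ) :
    (∑ i ∈ range m, φ ^ ((i : ℤ) - m).natAbs) * (1 - φ) = φ * (1 - φ ^ m) := by
  have hreflect : ∑ i ∈ range m, φ ^ ((i : ℤ) - m).natAbs = φ * ∑ k ∈ range m, φ ^ k := by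
    rw [← sum_range_reflect, mul_sum]
    refine sum_congr rfl fun k hk => ?_
    rw [← pow_succ']
    congr 1
    have := mem_range.1 hk
    omega
  rw [hreflect, mul_assoc, mul_comm _ (1 - φ), mul_neg_geom_sum]

lemma sum_range_sum_range_pow_natAbs_sub_mul_sq (φ : ℝ) (n : ℕ) :
    (∑ i ∈ range n, ∑ j ∈ range n, φ ^ ((i : ℤ) - j).natAbs) * (1 - φ) ^ 2
      = n * (1 - φ ^ 2) - 2 * φ * (1 - φ ^ n) := by
  induction n with
  | zero => simp
  | succ m ih =>
    have hcol := sum_range_pow_natAbs_sub_mul φ m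
    have hrow : ∑ j ∈ range m, φ ^ ((m : ℤ) - j).natAbs
        = ∑ i ∈ range m, φ ^ ((i : ℤ) - m).natAbs :=
      sum_congr rfl fun j _ => by congr 1; omega
    simp only [sum_range_succ, sum_add_distrib, hrow, sub_self, Int.natAbs_zero, pow_zero]
    push_cast
    linear_combination ih + 2 * (1 - φ) * hcol

lemma sum_fin_sum_fin_pow_natAbs_sub_mul_sq (φ : ℝ) (n : ℕ) :
    (∑ i : Fin n, ∑ j : Fin n, φ ^ ((i : ℤ) - j).natAbs) * (1 - φ) ^ 2
      = n * (1 - φ ^ 2) - 2 * φ * (1 - φ ^ n) := by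
  have hinner (i : ℕ) : ∑ j : Fin n, φ ^ ((i : ℤ) - j).natAbs
      = ∑ j ∈ range n, φ ^ ((i : ℤ) - j).natAbs :=
    Fin.sum_univ_eq_sum_range (fun j => φ ^ ((i : ℤ) - j).natAbs) n
  simp only [hinner]
  rw [Fin.sum_univ_eq_sum_range (fun i => ∑ j ∈ range n, φ ^ ((i : ℤ) - j).natAbs),
    sum_range_sum_range_pow_natAbs_sub_mul_sq]

namespace Matrix

variable {m : Type*} [Fintype m]

open scoped MatrixOrder in
lemma PosSemidef.eq_sqrt_of_sq_eq [DecidableEq m] {A B : Matrix m m ℝ} (hB : B.PosSemidef)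
    (hA : A.PosSemidef) (h : B ^ 2 = A) : B = hA.sqrt := by
  -- `hA.sqrt` is the continuous functional calculus square root, which is unique.
  have e : hA.sqrt = CFC.sqrt A := by
    rw [CFC.sqrt_eq_real_sqrt A (Matrix.nonneg_iff_posSemidef.2 hA),
      cfcₙ_eq_cfc (hf := Real.continuous_sqrt.continuousOn) (hf0 := Real.sqrt_zero), hA.1.cfc_eq,
      Matrix.IsHermitian.cfc, Matrix.PosSemidef.sqrt, Unitary.conjStarAlgAut_apply]
  rw [e, eq_comm, CFC.sqrt_eq_iff A B (Matrix.nonneg_iff_posSemidef.2 hA)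
    (Matrix.nonneg_iff_posSemidef.2 hB), ← pow_two, h]

lemma of_const_mul_mul_of_const (a b : ℝ) (A : Matrix m m ℝ) :
    (of fun _ _ => a : Matrix m m ℝ) * A * of (fun _ _ => b) =
      of fun _ _ => a * b * ∑ i, ∑ j, A i j := by
  ext
  simp only [mul_apply, of_apply, ← sum_mul, ← mul_sum]
  rw [sum_comm]
  ring

lemma of_const_mul_of_const (a b : ℝ) :
    (of fun _ _ => a : Matrix m m ℝ) * of (fun _ _ => b) = of fun _ _ => Fintype.card m * a * b := by
  ext
  simp [mul_apply]
  ring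

lemma posSemidef_of_const {t : ℝ} (ht : 0 ≤ t) : (of fun _ _ => t : Matrix m m ℝ).PosSemidef := by
  convert posSemidef_vecMulVec_self_star (fun _ : m => √t)
  ext
  simp [vecMulVec_apply, Real.mul_self_sqrt ht]

lemma PosSemidef.sqrt_eq_of_const [DecidableEq m] {A : Matrix m m ℝ} {t : ℝ} (hA : A.PosSemidef)
    (hAt : A = of fun _ _ => t) : hA.sqrt = of fun _ _ => √(t / Fintype.card m) := by
  subst hAt
  cases isEmpty_or_nonempty m with
  | inl _ => exact Subsingleton.elim _ _
  | inr hm =>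
    have ht : 0 ≤ t := by simpa using hA.diag_nonneg (i := hm.some)
    have hcard : (0 : ℝ) < Fintype.card m := by exact_mod_cast Fintype.card_pos
    refine ((posSemidef_of_const (Real.sqrt_nonneg _)).eq_sqrt_of_sq_eq hA ?_).symm
    rw [sq, of_const_mul_of_const, mul_assoc, Real.mul_self_sqrt (by positivity),
      mul_div_cancel₀ _ hcard.ne']

lemma trace_of_const (c : ℝ) : (of fun _ _ => c : Matrix m m ℝ).trace = Fintype.card m * c := by
  simp [trace]

end Matrix

theorem stmt_9_general (n : ℕ) (σ φ : ℝ)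
    (hφ2 : φ < 1)
    (S0 S : Matrix (Fin n) (Fin n) ℝ)
    (hS0def : S0 = Matrix.of fun _ _ => σ ^ 2)
    (hSdef : S = Matrix.of fun (i j : Fin n) => σ ^ 2 * φ ^ ((i : ℤ) - (j : ℤ)).natAbs)
    (hS0 : S0.PosSemidef)
    (hM : (hS0.sqrt * S * hS0.sqrt).PosSemidef) :
    hM.sqrt.trace =
      σ ^ 2 * Real.sqrt ((n : ℝ) * (1 - φ ^ 2) - 2 * φ * (1 - φ ^ n)) / (1 - φ) := by
  obtain rfl | hn := n.eq_zero_or_pos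
  · simp
  set F := ∑ i : Fin n, ∑ j : Fin n, φ ^ ((i : ℤ) - j).natAbs
  have hsum : ∑ i, ∑ j, S i j = σ ^ 2 * F := by
    simp only [hSdef, of_apply, ← mul_sum, F]
  have hR : (n : ℝ) * (1 - φ ^ 2) - 2 * φ * (1 - φ ^ n) = F * (1 - φ) ^ 2 :=
    (sum_fin_sum_fin_pow_natAbs_sub_mul_sq φ n).symm
  have hsqrt0 : hS0.sqrt = of fun _ _ => √(σ ^ 2 / n) := by
    simpa using hS0.sqrt_eq_of_const hS0def
  have hMconst : hS0.sqrt * S * hS0.sqrt = of fun _ _ => σ ^ 2 / n * (σ ^ 2 * F) := by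
    rw [hsqrt0, of_const_mul_mul_of_const, hsum, Real.mul_self_sqrt (by positivity)]
  rw [hM.sqrt_eq_of_const hMconst, trace_of_const, hR,
    Real.sqrt_mul' _ (sq_nonneg _), Real.sqrt_sq (by linarith), Fintype.card_fin,
    show σ ^ 2 / n * (σ ^ 2 * F) / n = (σ ^ 2 / n) ^ 2 * F by ring,
    Real.sqrt_mul (sq_nonneg _), Real.sqrt_sq (by positivity)]
  have hn' : (n : ℝ) ≠ 0 := by positivity
  have hφ : 1 - φ ≠ 0 := (sub_pos.2 hφ2).ne'
  field_simp

/-- Trace formula for the AR(1) Wasserstein-2 distance computation: with `S0` the `n × n`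
matrix with all entries `σ²` (covariance of the constant-in-time base model) and `S` the
AR(1) covariance matrix with entries `σ² φ^{|i−j|}`, both positive semidefinite, the trace
of the positive semidefinite square root of `S0^{1/2} S S0^{1/2}` equals
`σ² √(n(1 − φ²) − 2φ(1 − φⁿ)) / (1 − φ)`. -/
theorem stmt_9 (n : ℕ) (hn : 1 ≤ n) (σ φ : ℝ) (hσ : 0 < σ)
    (hφ1 : -1 < φ) (hφ2 : φ < 1)
    (S0 S : Matrix (Fin n) (Fin n) ℝ)
    (hS0def : S0 = Matrix.of fun _ _ => σ ^ 2)
    (hSdef : S = Matrix.of fun (i j : Fin n) => σ ^ 2 * φ ^ ((i : ℤ) - (j : ℤ)).natAbs)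
    (hS0 : S0.PosSemidef) (hS : S.PosSemidef)
    (hM : (hS0.sqrt * S * hS0.sqrt).PosSemidef) :
    hM.sqrt.trace =
      σ ^ 2 * Real.sqrt ((n : ℝ) * (1 - φ ^ 2) - 2 * φ * (1 - φ ^ n)) / (1 - φ) :=
  stmt_9_general n σ φ hφ2 S0 S hS0def hSdef hS0 hM
end

section
/- For every natural number n ≥ 1 and every real φ ∈ [−1, 1): (i) n(1 − φ²) − 2φ(1 − φⁿ) ≥ 0, and (ii) √(n(1 − φ²) − 2φ(1 − φⁿ)) / (1 − φ) ≥ √(1 − (−1)ⁿ) / √2. Consequently, for every σ > 0, the quantity 2σ²(n − √(n(1 − φ²) − 2φ(1 − φⁿ))/(1 − φ)) is bounded above by σ²(2n − √2·√(1 − (−1)ⁿ)); that is, the squared Wasserstein-2 distance between the stationary AR(1) model with parameter φ and the constant base model is bounded by c² where c = σ(2n − √2·√(1 − (−1)ⁿ))^{1/2} < ∞. -/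
lemma key_ar1 (φ : ℝ) (h1 : -1 ≤ φ) (h2 : φ ≤ 1) :
    ∀ n : ℕ, (1 - φ) ^ 2 * ((1 - (-1 : ℝ) ^ n) / 2) ≤
      (n : ℝ) * (1 - φ ^ 2) - 2 * φ * (1 - φ ^ n) := by
  intro n
  induction n using Nat.twoStepInduction with
  | zero => simp
  | one => push_cast; nlinarith [sq_nonneg (1 - φ)]
  | more m ih _ =>
    have habs : |φ ^ (m + 1)| ≤ 1 := by
      rw [abs_pow]; exact pow_le_one₀ (abs_nonneg _) (abs_le.mpr ⟨h1, h2⟩)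
    have hle : φ ^ (m + 1) ≤ 1 := (abs_le.mp habs).2
    have hφ2 : 0 ≤ 1 - φ ^ 2 := by nlinarith
    have hneg : ((-1 : ℝ)) ^ (m + 2) = (-1 : ℝ) ^ m := by
      rw [pow_succ, pow_succ]; ring
    have h1' : φ ^ (m + 1) = φ ^ m * φ := pow_succ φ m
    have h2' : φ ^ (m + 2) = φ ^ m * φ * φ := by rw [pow_succ, pow_succ]
    push_cast
    rw [hneg, h2']
    rw [h1'] at hle
    nlinarith [ih, mul_nonneg hφ2 (sub_nonneg.mpr hle)]

/-- Bounds for the squared Wasserstein-2 distance between the stationary AR(1) model and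
the constant base model: for `n ≥ 1` and `φ ∈ [−1, 1)`,
(i) `n(1 − φ²) − 2φ(1 − φⁿ) ≥ 0`,
(ii) `√(n(1 − φ²) − 2φ(1 − φⁿ))/(1 − φ) ≥ √(1 − (−1)ⁿ)/√2`, and consequently
(iii) for every `σ > 0`,
`2σ²(n − √(n(1 − φ²) − 2φ(1 − φⁿ))/(1 − φ)) ≤ σ²(2n − √2 √(1 − (−1)ⁿ))`. -/
theorem stmt_10 (n : ℕ) (hn : 1 ≤ n) (φ : ℝ) (hφ1 : -1 ≤ φ) (hφ2 : φ < 1) :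
    0 ≤ (n : ℝ) * (1 - φ ^ 2) - 2 * φ * (1 - φ ^ n) ∧
    Real.sqrt (1 - (-1 : ℝ) ^ n) / Real.sqrt 2 ≤
      Real.sqrt ((n : ℝ) * (1 - φ ^ 2) - 2 * φ * (1 - φ ^ n)) / (1 - φ) ∧
    ∀ σ : ℝ, 0 < σ →
      2 * σ ^ 2 * ((n : ℝ) -
          Real.sqrt ((n : ℝ) * (1 - φ ^ 2) - 2 * φ * (1 - φ ^ n)) / (1 - φ)) ≤
        σ ^ 2 * (2 * (n : ℝ) - Real.sqrt 2 * Real.sqrt (1 - (-1 : ℝ) ^ n)) := by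
  have hkey := key_ar1 φ hφ1 hφ2.le n
  have hc0 : (0 : ℝ) ≤ 1 - (-1 : ℝ) ^ n := by
    rcases Nat.even_or_odd n with h | h
    · rw [h.neg_one_pow]; norm_num
    · rw [h.neg_one_pow]; norm_num
  have hc0' : (0 : ℝ) ≤ (1 - (-1 : ℝ) ^ n) / 2 := by linarith
  have h1φ : (0 : ℝ) < 1 - φ := by linarith
  have hE : 0 ≤ (n : ℝ) * (1 - φ ^ 2) - 2 * φ * (1 - φ ^ n) := by
    have : (0:ℝ) ≤ (1 - φ) ^ 2 * ((1 - (-1 : ℝ) ^ n) / 2) :=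
      mul_nonneg (sq_nonneg _) hc0'
    linarith
  have h5 : Real.sqrt ((1 - φ) ^ 2 * ((1 - (-1 : ℝ) ^ n) / 2)) ≤
      Real.sqrt ((n : ℝ) * (1 - φ ^ 2) - 2 * φ * (1 - φ ^ n)) :=
    Real.sqrt_le_sqrt hkey
  rw [Real.sqrt_mul (sq_nonneg _), Real.sqrt_sq h1φ.le,
    Real.sqrt_div' _ (by norm_num)] at h5
  have hii : Real.sqrt (1 - (-1 : ℝ) ^ n) / Real.sqrt 2 ≤
      Real.sqrt ((n : ℝ) * (1 - φ ^ 2) - 2 * φ * (1 - φ ^ n)) / (1 - φ) := by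
    rw [le_div_iff₀ h1φ]
    linarith [h5]
  refine ⟨hE, hii, ?_⟩
  intro σ hσ
  have hs2 : Real.sqrt 2 * Real.sqrt 2 = 2 := Real.mul_self_sqrt (by norm_num)
  have hs2pos : (0 : ℝ) < Real.sqrt 2 := Real.sqrt_pos.mpr (by norm_num)
  have hσ2 : (0 : ℝ) < σ ^ 2 := by positivity
  -- √2 * √(1-(-1)^n) = 2 * (√(1-(-1)^n) / √2)
  have hrw : Real.sqrt 2 * Real.sqrt (1 - (-1 : ℝ) ^ n) =
      2 * (Real.sqrt (1 - (-1 : ℝ) ^ n) / Real.sqrt 2) := by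
    field_simp
    linear_combination Real.sqrt (1 - (-1:ℝ)^n) * hs2
  rw [hrw]
  nlinarith [mul_le_mul_of_nonneg_left hii hσ2.le]
end
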